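/- arXiv:math/0503685 — 3 statements merged into one kernel-verified Lean document; each statement's English description precedes it below -/
import Mathlib

section
/- Let Δ be a simplicial complex on [n] and J_Δ ⊂ E its exterior face ideal, and let 1 ≤ i < j ≤ n. Then (J_Δ)_{ij}(0) = J_{Shift_{ij}(Δ)}. -/
/-- The exterior algebra `E = ⋀ V` of an `n`-dimensional `K`-vector space `V`
with distinguished basis `e_1, …, e_n` (modeled on `V = Fin n → K`). -/
abbrev ExtAlg (K : Type) [Field K] (n : ℕ) := ExteriorAlgebra K (Fin n → K)

/-- The monomial `e_σ = e_{j_1} ∧ ⋯ ∧ e_{j_d}` for `σ = {j_1 < ⋯ < j_d} ⊆ [n]`. -/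
noncomputable def eMon (K : Type) [Field K] (n : ℕ) (σ : Finset (Fin n)) : ExtAlg K n :=
  ((σ.sort (· ≤ ·)).map fun k => ExteriorAlgebra.ι K (Pi.single k (1 : K))).prod

/-- The span of the degree-`d` monomials: the image of `⋀^d V` in `E`. -/
noncomputable def monSpan (K : Type) [Field K] (n : ℕ) (d : ℕ) :
    Submodule K (ExtAlg K n) :=
  Submodule.span K {x | ∃ σ : Finset (Fin n), σ.card = d ∧ x = eMon K n σ}

/-- A subspace of `E` is a (two-sided) ideal. -/
def IsIdealE {K : Type} [Field K] {n : ℕ} (I : Submodule K (ExtAlg K n)) : Prop :=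
  ∀ x y : ExtAlg K n, y ∈ I → x * y ∈ I ∧ y * x ∈ I

/-- A subspace of `E` is (graded) homogeneous. -/
def IsHomogE {K : Type} [Field K] {n : ℕ} (I : Submodule K (ExtAlg K n)) : Prop :=
  I = ⨆ d : ℕ, I ⊓ monSpan K n d

/-- The two-sided ideal of `E` generated by a set. -/
noncomputable def idealSpanE (K : Type) [Field K] (n : ℕ) (s : Set (ExtAlg K n)) :
    Submodule K (ExtAlg K n) :=
  Submodule.span K {x | ∃ a ∈ s, ∃ u v : ExtAlg K n, x = u * a * v}

/-- The exterior face ideal `J_Δ ⊆ E`, generated by the monomials `e_σ`, `σ ∉ Δ`. -/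
noncomputable def faceIdealE (K : Type) [Field K] {n : ℕ} (Δ : Set (Finset (Fin n))) :
    Submodule K (ExtAlg K n) :=
  idealSpanE K n {x | ∃ σ : Finset (Fin n), σ ∉ Δ ∧ x = eMon K n σ}

/-- `e_τ ≤_rev e_σ` in the reverse lexicographic order induced by `e_1 > ⋯ > e_n`:
either `τ = σ`, or the largest element of the symmetric difference belongs to `τ`. -/
def revLexLe {n : ℕ} (τ σ : Finset (Fin n)) : Prop :=
  τ = σ ∨ ∃ k ∈ τ, k ∉ σ ∧ ∀ l ∈ σ, l ∉ τ → l < k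

/-- The span of the monomials `e_ρ` of degree `|σ|` with `e_ρ ≤_rev e_σ`. -/
noncomputable def monSpanLe (K : Type) [Field K] {n : ℕ} (σ : Finset (Fin n)) :
    Submodule K (ExtAlg K n) :=
  Submodule.span K
    {x | ∃ ρ : Finset (Fin n), ρ.card = σ.card ∧ revLexLe ρ σ ∧ x = eMon K n ρ}

/-- The span of the monomials `e_ρ` of degree `|σ|` with `e_ρ <_rev e_σ`. -/
noncomputable def monSpanLt (K : Type) [Field K] {n : ℕ} (σ : Finset (Fin n)) :
    Submodule K (ExtAlg K n) :=
  Submodule.span K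
    {x | ∃ ρ : Finset (Fin n), ρ.card = σ.card ∧ revLexLe ρ σ ∧ ρ ≠ σ ∧ x = eMon K n ρ}

/-- `e_σ` is the initial monomial (with respect to `<_rev`) of some element of `I`. -/
def IsInitialMonomial {K : Type} [Field K] {n : ℕ} (I : Submodule K (ExtAlg K n))
    (σ : Finset (Fin n)) : Prop :=
  ∃ f ∈ I, f ∈ monSpanLe K σ ∧ f ∉ monSpanLt K σ ∧ f ≠ 0

/-- The initial ideal `in_{<rev}(I)` of a homogeneous ideal `I ⊆ E`. -/
noncomputable def initialIdealE (K : Type) [Field K] {n : ℕ}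
    (I : Submodule K (ExtAlg K n)) : Submodule K (ExtAlg K n) :=
  Submodule.span K {x | ∃ σ : Finset (Fin n), IsInitialMonomial I σ ∧ x = eMon K n σ}

/-- The algebra automorphism of `E` induced by an (invertible) matrix `g`,
i.e. the action of `GL(n;K)` on `E`. -/
noncomputable def matAlgMap (K : Type) [Field K] {n : ℕ} (g : Matrix (Fin n) (Fin n) K) :
    ExtAlg K n →ₐ[K] ExtAlg K n :=
  ExteriorAlgebra.map (Matrix.toLin' g)

/-- The image `φ(I)` of a subspace `I ⊆ E` under the action of a matrix `φ = g`. -/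
noncomputable def applyMat (K : Type) [Field K] {n : ℕ} (g : Matrix (Fin n) (Fin n) K)
    (I : Submodule K (ExtAlg K n)) : Submodule K (ExtAlg K n) :=
  Submodule.map (matAlgMap K g).toLinearMap I

/-- `J` is the generic initial ideal `Gin^E(I)` of `I`: there is a nonempty Zariski
open subset `U` of `GL(n;K)` (the nonvanishing locus of a nonzero polynomial in the
matrix entries) such that `in_{<rev}(φ(I)) = J` for every `φ ∈ U`. -/
def IsGinE {K : Type} [Field K] {n : ℕ} (I J : Submodule K (ExtAlg K n)) : Prop :=
  ∃ p : MvPolynomial (Fin n × Fin n) K, p ≠ 0 ∧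
    ∀ g : Matrix (Fin n) (Fin n) K, IsUnit g.det →
      MvPolynomial.eval (fun kl => g kl.1 kl.2) p ≠ 0 →
        initialIdealE K (applyMat K g I) = J

/-- `m_{≤i}(J, d)`: the number of monomials `e_σ ∈ J` of degree `d` with
`m(e_σ) = max σ ≤ i` (in the `1`-based labelling `[n] = {1, …, n}`). -/
noncomputable def mLeE {K : Type} [Field K] {n : ℕ} (J : Submodule K (ExtAlg K n))
    (i d : ℕ) : ℕ :=
  Nat.card {σ : Finset (Fin n) // σ.card = d ∧ (∀ k ∈ σ, (k : ℕ) < i) ∧ eMon K n σ ∈ J}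

open Classical in
/-- The matrix `M_τ(I,d)`: the submatrix of `M(I,d) = (α_a^σ)` consisting of the
columns indexed by the `d`-element subsets `σ` with `e_τ ≤_rev e_σ` (realized by
zeroing out all other columns, which does not change the rank). -/
noncomputable def MtauMatrix {K : Type} [Field K] {n : ℕ} {s : ℕ}
    (α : Fin s → Finset (Fin n) → K) (d : ℕ) (τ : Finset (Fin n)) :
    Matrix (Fin s) (Finset (Fin n)) K :=
  Matrix.of fun a σ => if σ.card = d ∧ τ.card = d ∧ revLexLe τ σ then α a σ else 0

open Classical in
/-- The matrix `M'_τ(I,d)`: the submatrix of `M_τ(I,d)` obtained by removing the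
column indexed by `τ` (realized by zeroing out all other columns). -/
noncomputable def MtauMatrix' {K : Type} [Field K] {n : ℕ} {s : ℕ}
    (α : Fin s → Finset (Fin n) → K) (d : ℕ) (τ : Finset (Fin n)) :
    Matrix (Fin s) (Finset (Fin n)) K :=
  Matrix.of fun a σ =>
    if σ.card = d ∧ τ.card = d ∧ revLexLe τ σ ∧ σ ≠ τ then α a σ else 0

/-- `f : Fin s → E` is a `K`-basis of the degree-`d` part `I_d = I ⊓ ⋀^d V` of `I`. -/
def IsBasisOfDegPart {K : Type} [Field K] {n : ℕ} (I : Submodule K (ExtAlg K n))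
    (d s : ℕ) (f : Fin s → ExtAlg K n) : Prop :=
  LinearIndependent K f ∧ Submodule.span K (Set.range f) = I ⊓ monSpan K n d

/-- `α` is the coefficient matrix of `φ(f_1), …, φ(f_s)` in the monomial basis:
`φ(f_a) = ∑_{|σ| = d} α_a^σ e_σ`. -/
def IsCoeffMatrix {K : Type} [Field K] {n : ℕ} (g : Matrix (Fin n) (Fin n) K)
    {s : ℕ} (f : Fin s → ExtAlg K n) (α : Fin s → Finset (Fin n) → K) (d : ℕ) : Prop :=
  ∀ a : Fin s, matAlgMap K g (f a) =
    ∑ σ ∈ Finset.univ.filter (fun σ : Finset (Fin n) => σ.card = d), α a σ • eMon K n σ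

/-- `σ_(i,d) = {i − d + 1, i − d + 2, …, i} ⊆ [n]` (in `1`-based labelling). -/
def sigmaSet (n i d : ℕ) : Finset (Fin n) :=
  Finset.univ.filter fun k : Fin n => i - d ≤ (k : ℕ) ∧ (k : ℕ) < i

open Classical in
/-- The value of the map `S^t_{ij}` on the monomial `e_σ`:
`S^t_{ij}(e_σ) = e_{(σ∖{j})∪{i}} + t·e_σ` if `j ∈ σ`, `i ∉ σ` and
`e_{(σ∖{j})∪{i}} ∉ I`, and `S^t_{ij}(e_σ) = e_σ` otherwise. -/
noncomputable def StVal {K : Type} [Field K] {n : ℕ} (I : Submodule K (ExtAlg K n))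
    (i j : Fin n) (t : K) (σ : Finset (Fin n)) : ExtAlg K n :=
  if j ∈ σ ∧ i ∉ σ ∧ eMon K n (insert i (σ.erase j)) ∉ I then
    eMon K n (insert i (σ.erase j)) + t • eMon K n σ
  else eMon K n σ

/-- `I_{ij}(t) ⊆ E`: the image of the monomial ideal `I` under the linear map
`S^t_{ij}` (the span of the images of the monomials of `I`, which form a basis). -/
noncomputable def shiftImageE {K : Type} [Field K] {n : ℕ}
    (I : Submodule K (ExtAlg K n)) (i j : Fin n) (t : K) : Submodule K (ExtAlg K n) :=
  Submodule.span K
    {x | ∃ σ : Finset (Fin n), eMon K n σ ∈ I ∧ x = StVal I i j t σ}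

/-- `I` is a monomial ideal of `E`: an ideal spanned by the monomials belonging
to it. -/
def IsMonomialIdealE {K : Type} [Field K] {n : ℕ} (I : Submodule K (ExtAlg K n)) :
    Prop :=
  IsIdealE I ∧
    I = Submodule.span K {x | ∃ σ : Finset (Fin n), eMon K n σ ∈ I ∧ x = eMon K n σ}

open Classical in
/-- The matrix of the linear automorphism `λ^t_{ij}` of `V` with
`λ^t_{ij}(e_k) = e_k` for `k ≠ j` and `λ^t_{ij}(e_j) = e_i + t·e_j`. -/
noncomputable def lamMatrix (K : Type) [Field K] {n : ℕ} (i j : Fin n) (t : K) :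
    Matrix (Fin n) (Fin n) K :=
  Matrix.of fun k l =>
    if l = j then (if k = i then 1 else if k = j then t else 0)
    else (if k = l then 1 else 0)

open Classical in
/-- `C_{ij}(σ)`, the basic combinatorial shifting operation on a single face. -/
noncomputable def shiftFace {n : ℕ} (Δ : Set (Finset (Fin n))) (i j : Fin n)
    (σ : Finset (Fin n)) : Finset (Fin n) :=
  if i ∈ σ ∧ j ∉ σ ∧ insert j (σ.erase i) ∉ Δ then insert j (σ.erase i) else σ

/-- `Shift_{ij}(Δ)`. -/
noncomputable def shiftOp {n : ℕ} (Δ : Set (Finset (Fin n))) (i j : Fin n) :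
    Set (Finset (Fin n)) :=
  (shiftFace Δ i j) '' Δ

/-- A simplicial complex on `[n]`, modeled as a set of finsets of `Fin n`. -/
def IsSimplicialComplex {n : ℕ} (Δ : Set (Finset (Fin n))) : Prop :=
  (∀ j : Fin n, {j} ∈ Δ) ∧ ∀ σ ∈ Δ, ∀ τ : Finset (Fin n), τ ⊆ σ → τ ∈ Δ

/-! ### Auxiliary development -/

variable {K : Type} [Field K] {n : ℕ}

noncomputable def eb (K : Type) [Field K] {n : ℕ} (k : Fin n) : ExtAlg K n :=
  ExteriorAlgebra.ι K (Pi.single k (1 : K))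

lemma eMon_def (σ : Finset (Fin n)) :
    eMon K n σ = ((σ.sort (· ≤ ·)).map (eb K)).prod := rfl

lemma eMon_empty : eMon K n ∅ = 1 := by simp [eMon_def]

lemma eMon_insert {a : Fin n} {σ : Finset (Fin n)} (h : ∀ b ∈ σ, a < b) (ha : a ∉ σ) :
    eMon K n (insert a σ) = eb K a * eMon K n σ := by
  rw [eMon_def, eMon_def, Finset.sort_insert _ (fun b hb => (h b hb).le) ha,
    List.map_cons, List.prod_cons]

lemma eb_mul_swap (k l : Fin n) : eb K k * eb K l = -(eb K l * eb K k) :=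
  eq_neg_of_add_eq_zero_left (ExteriorAlgebra.ι_add_mul_swap _ _)

lemma eb_sq (k : Fin n) : eb K k * eb K k = 0 := ExteriorAlgebra.ι_sq_zero _

lemma eb_mul_eMon (k : Fin n) (σ : Finset (Fin n)) :
    ∃ c : K, eb K k * eMon K n σ = c • eMon K n (insert k σ) := by
  induction σ using Finset.strongInduction with
  | _ σ IH =>
  rcases σ.eq_empty_or_nonempty with rfl | hne
  · exact ⟨1, by simp [eMon_def, Finset.sort_singleton]⟩
  · set a := σ.min' hne with ha
    have haσ : a ∈ σ := σ.min'_mem hne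
    have hrest : ∀ b ∈ σ.erase a, a < b := fun b hb =>
      lt_of_le_of_ne (σ.min'_le b (Finset.mem_of_mem_erase hb))
        (Ne.symm (Finset.ne_of_mem_erase hb))
    have hana : a ∉ σ.erase a := Finset.notMem_erase _ _
    have hσ : σ = insert a (σ.erase a) := (Finset.insert_erase haσ).symm
    have hMon : eMon K n σ = eb K a * eMon K n (σ.erase a) := by
      conv_lhs => rw [hσ]
      exact eMon_insert hrest hana
    rcases lt_trichotomy k a with hk | rfl | hk
    · have hknσ : k ∉ σ := fun hkσ => absurd (σ.min'_le k hkσ) (not_le.mpr hk)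
      have : ∀ b ∈ σ, k < b := fun b hb => lt_of_lt_of_le hk (σ.min'_le b hb)
      exact ⟨1, by rw [eMon_insert this hknσ, one_smul]⟩
    · refine ⟨0, ?_⟩
      rw [Finset.insert_eq_self.mpr haσ, zero_smul, hMon, ← mul_assoc, eb_sq, zero_mul]
    · obtain ⟨c, hc⟩ := IH (σ.erase a) (Finset.erase_ssubset haσ)
      refine ⟨-c, ?_⟩
      have h1 : eb K k * eb K a = -(eb K a * eb K k) := eb_mul_swap k a
      have h2 : ∀ b ∈ insert k (σ.erase a), a < b := by
        intro b hb
        rcases Finset.mem_insert.mp hb with rfl | hb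
        · exact hk
        · exact hrest b hb
      have h3 : a ∉ insert k (σ.erase a) := by
        simp only [Finset.mem_insert]
        push_neg
        exact ⟨hk.ne, hana⟩
      have h4 : insert a (insert k (σ.erase a)) = insert k σ := by
        rw [Finset.insert_comm, ← hσ]
      calc eb K k * eMon K n σ = eb K k * (eb K a * eMon K n (σ.erase a)) := by rw [hMon]
        _ = (eb K k * eb K a) * eMon K n (σ.erase a) := by rw [mul_assoc]
        _ = -(eb K a * (eb K k * eMon K n (σ.erase a))) := by
              rw [h1, neg_mul, mul_assoc]
        _ = -(eb K a * (c • eMon K n (insert k (σ.erase a)))) := by rw [hc]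
        _ = (-c) • (eb K a * eMon K n (insert k (σ.erase a))) := by
              rw [mul_smul_comm, neg_smul]
        _ = (-c) • eMon K n (insert k σ) := by rw [← eMon_insert h2 h3, h4]

lemma eMon_mul_eb (σ : Finset (Fin n)) (k : Fin n) :
    ∃ c : K, eMon K n σ * eb K k = c • (eb K k * eMon K n σ) := by
  induction σ using Finset.strongInduction with
  | _ σ IH =>
  rcases σ.eq_empty_or_nonempty with rfl | hne
  · exact ⟨1, by simp [eMon_empty]⟩
  · set a := σ.min' hne with ha
    have haσ : a ∈ σ := σ.min'_mem hne
    have hrest : ∀ b ∈ σ.erase a, a < b := fun b hb =>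
      lt_of_le_of_ne (σ.min'_le b (Finset.mem_of_mem_erase hb))
        (Ne.symm (Finset.ne_of_mem_erase hb))
    have hMon : eMon K n σ = eb K a * eMon K n (σ.erase a) := by
      conv_lhs => rw [(Finset.insert_erase haσ).symm]
      exact eMon_insert hrest (Finset.notMem_erase _ _)
    obtain ⟨c, hc⟩ := IH (σ.erase a) (Finset.erase_ssubset haσ)
    refine ⟨-c, ?_⟩
    calc eMon K n σ * eb K k = eb K a * (eMon K n (σ.erase a) * eb K k) := by
          rw [hMon, mul_assoc]
      _ = eb K a * (c • (eb K k * eMon K n (σ.erase a))) := by rw [hc]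
      _ = c • ((eb K a * eb K k) * eMon K n (σ.erase a)) := by
          rw [mul_smul_comm, mul_assoc]
      _ = c • (-(eb K k * eb K a) * eMon K n (σ.erase a)) := by rw [eb_mul_swap]
      _ = (-c) • (eb K k * eMon K n σ) := by
          rw [hMon, neg_mul, smul_neg, ← neg_smul, mul_assoc]

lemma eMon_mul_eb' (σ : Finset (Fin n)) (k : Fin n) :
    ∃ c : K, eMon K n σ * eb K k = c • eMon K n (insert k σ) := by
  obtain ⟨c, hc⟩ := eMon_mul_eb (K := K) σ k
  obtain ⟨d, hd⟩ := eb_mul_eMon (K := K) k σ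
  exact ⟨c * d, by rw [hc, hd, smul_smul]⟩

/-- span of monomials `e_τ` with `τ ⊇ σ`. -/
noncomputable def Wspan (K : Type) [Field K] {n : ℕ} (σ : Finset (Fin n)) :
    Submodule K (ExtAlg K n) :=
  Submodule.span K {x | ∃ τ : Finset (Fin n), σ ⊆ τ ∧ x = eMon K n τ}

lemma eMon_mem_Wspan {σ τ : Finset (Fin n)} (h : σ ⊆ τ) : eMon K n τ ∈ Wspan K σ :=
  Submodule.subset_span ⟨τ, h, rfl⟩

lemma Wspan_mul_eb {σ : Finset (Fin n)} (k : Fin n) {x : ExtAlg K n} (hx : x ∈ Wspan K σ) :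
    eb K k * x ∈ Wspan K σ ∧ x * eb K k ∈ Wspan K σ := by
  constructor
  · have : x ∈ Submodule.comap (LinearMap.mulLeft K (eb K k)) (Wspan K σ) := by
      refine Submodule.span_le.mpr ?_ hx
      rintro y ⟨τ, hτ, rfl⟩
      refine Submodule.mem_comap.mpr ?_
      rw [LinearMap.mulLeft_apply]
      obtain ⟨c, hc⟩ := eb_mul_eMon (K := K) k τ
      rw [hc]
      have hsub : σ ⊆ insert k τ := hτ.trans (Finset.subset_insert _ _)
      exact Submodule.smul_mem _ _ (eMon_mem_Wspan hsub)
    exact this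
  · have : x ∈ Submodule.comap (LinearMap.mulRight K (eb K k)) (Wspan K σ) := by
      refine Submodule.span_le.mpr ?_ hx
      rintro y ⟨τ, hτ, rfl⟩
      refine Submodule.mem_comap.mpr ?_
      rw [LinearMap.mulRight_apply]
      obtain ⟨c, hc⟩ := eMon_mul_eb' (K := K) τ k
      rw [hc]
      have hsub : σ ⊆ insert k τ := hτ.trans (Finset.subset_insert _ _)
      exact Submodule.smul_mem _ _ (eMon_mem_Wspan hsub)
    exact this

lemma iota_eq_sum (v : Fin n → K) :
    ExteriorAlgebra.ι K v = ∑ k : Fin n, v k • eb K k := by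
  have hv0 : v = ∑ k : Fin n, v k • (Pi.single k (1 : K) : Fin n → K) := by
    ext l
    simp [Pi.single_apply, Finset.sum_apply]
  conv_lhs => rw [hv0]
  rw [map_sum]
  simp [eb, map_smul]

lemma Wspan_mul_iota {σ : Finset (Fin n)} (v : Fin n → K) {x : ExtAlg K n}
    (hx : x ∈ Wspan K σ) :
    ExteriorAlgebra.ι K v * x ∈ Wspan K σ ∧ x * ExteriorAlgebra.ι K v ∈ Wspan K σ := by
  constructor
  · rw [iota_eq_sum, Finset.sum_mul]
    exact Submodule.sum_mem _ fun k _ => by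
      rw [smul_mul_assoc]
      exact Submodule.smul_mem _ _ (Wspan_mul_eb k hx).1
  · rw [iota_eq_sum, Finset.mul_sum]
    exact Submodule.sum_mem _ fun k _ => by
      rw [mul_smul_comm]
      exact Submodule.smul_mem _ _ (Wspan_mul_eb k hx).2

lemma Wspan_mul_closed {σ : Finset (Fin n)} (u : ExtAlg K n) :
    ∀ x ∈ Wspan K σ, u * x ∈ Wspan K σ ∧ x * u ∈ Wspan K σ := by
  induction u using ExteriorAlgebra.induction with
  | algebraMap r =>
    intro x hx
    rw [← Algebra.commutes, ← Algebra.smul_def]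
    exact ⟨Submodule.smul_mem _ _ hx, Submodule.smul_mem _ _ hx⟩
  | ι v => exact fun x hx => Wspan_mul_iota v hx
  | mul u₁ u₂ h₁ h₂ =>
    intro x hx
    constructor
    · rw [mul_assoc]
      exact (h₁ _ (h₂ x hx).1).1
    · rw [← mul_assoc]
      exact (h₂ _ (h₁ x hx).2).2
  | add u₁ u₂ h₁ h₂ =>
    intro x hx
    constructor
    · rw [add_mul]; exact Submodule.add_mem _ (h₁ x hx).1 (h₂ x hx).1
    · rw [mul_add]; exact Submodule.add_mem _ (h₁ x hx).2 (h₂ x hx).2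

lemma mul_eMon_mul_mem_Wspan (σ : Finset (Fin n)) (u v : ExtAlg K n) :
    u * eMon K n σ * v ∈ Wspan K σ :=
  (Wspan_mul_closed v _ ((Wspan_mul_closed u _ (eMon_mem_Wspan (subset_refl σ))).1)).2

/-! ### A faithful model: creation operators on `Finset (Fin n) →₀ K` -/

/-- sign `(-1)^{#(m ∈ σ, m < k)}` -/
noncomputable def esgn (K : Type) [Field K] {n : ℕ} (k : Fin n) (σ : Finset (Fin n)) : K :=
  (-1 : K) ^ (σ.filter (fun m => m < k)).card

/-- creation operator -/
noncomputable def Lop (K : Type) [Field K] {n : ℕ} (k : Fin n) :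
    (Finset (Fin n) →₀ K) →ₗ[K] (Finset (Fin n) →₀ K) :=
  Finsupp.lsum K fun σ =>
    if k ∈ σ then (0 : K →ₗ[K] (Finset (Fin n) →₀ K))
    else esgn K k σ • Finsupp.lsingle (insert k σ)

lemma Lop_single (k : Fin n) (σ : Finset (Fin n)) (c : K) :
    Lop K k (Finsupp.single σ c) =
      if k ∈ σ then 0 else (esgn K k σ * c) • Finsupp.single (insert k σ) 1 := by
  rw [Lop, Finsupp.lsum_single]
  split_ifs with h
  · simp
  · rw [LinearMap.smul_apply, Finsupp.lsingle_apply, ← Finsupp.smul_single_one, smul_smul]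

lemma Lop_single_notMem {k : Fin n} {σ : Finset (Fin n)} (h : k ∉ σ) (c : K) :
    Lop K k (Finsupp.single σ c) = (esgn K k σ * c) • Finsupp.single (insert k σ) 1 := by
  rw [Lop_single, if_neg h]

lemma Lop_single_mem {k : Fin n} {σ : Finset (Fin n)} (h : k ∈ σ) (c : K) :
    Lop K k (Finsupp.single σ c) = 0 := by
  rw [Lop_single, if_pos h]

lemma esgn_insert_lt {k l : Fin n} (h : l < k) {σ : Finset (Fin n)} (hl : l ∉ σ) :
    esgn K k (insert l σ) = -esgn K k σ := by
  rw [esgn, esgn, Finset.filter_insert, if_pos h,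
    Finset.card_insert_of_notMem (fun hc => hl (Finset.mem_of_mem_filter _ hc)),
    pow_succ, mul_neg_one]

lemma esgn_insert_ge {k l : Fin n} (h : ¬ l < k) {σ : Finset (Fin n)} :
    esgn K k (insert l σ) = esgn K k σ := by
  rw [esgn, esgn, Finset.filter_insert, if_neg h]

lemma Lop_Lop_single (k l : Fin n) (hkl : k ≠ l) {σ : Finset (Fin n)} (hk : k ∉ σ)
    (hl : l ∉ σ) (c : K) :
    Lop K k (Lop K l (Finsupp.single σ c)) =
      (esgn K l σ * c * esgn K k (insert l σ)) • Finsupp.single (insert k (insert l σ)) 1 := by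
  rw [Lop_single_notMem hl c, map_smul,
    Lop_single_notMem (by simp [Finset.mem_insert, hkl, hk]) (1 : K), smul_smul, mul_one]

lemma Lop_anticomm (k l : Fin n) :
    Lop K k ∘ₗ Lop K l + Lop K l ∘ₗ Lop K k = 0 := by
  apply Finsupp.lhom_ext
  intro σ c
  simp only [LinearMap.add_apply, LinearMap.comp_apply, LinearMap.zero_apply]
  by_cases hk : k ∈ σ
  · rw [Lop_single_mem hk, map_zero, add_zero]
    by_cases hl : l ∈ σ
    · rw [Lop_single_mem hl, map_zero]
    · rw [Lop_single_notMem hl, map_smul,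
        Lop_single_mem (Finset.mem_insert_of_mem hk), smul_zero]
  · by_cases hl : l ∈ σ
    · rw [Lop_single_mem hl, map_zero, zero_add, Lop_single_notMem hk, map_smul,
        Lop_single_mem (Finset.mem_insert_of_mem hl), smul_zero]
    · rcases eq_or_ne k l with rfl | hkl
      · rw [Lop_single_notMem hk, map_smul,
          Lop_single_mem (Finset.mem_insert_self k σ), smul_zero, add_zero]
      · rw [Lop_Lop_single k l hkl hk hl, Lop_Lop_single l k hkl.symm hl hk,
          Finset.insert_comm, ← add_smul]
        convert zero_smul K _
        rcases lt_or_gt_of_ne hkl with h | h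
        · rw [esgn_insert_lt (K := K) h hk, esgn_insert_ge (K := K) (asymm h)]
          ring
        · rw [esgn_insert_lt (K := K) h hl, esgn_insert_ge (K := K) (asymm h)]
          ring

lemma Lop_sq (k : Fin n) : Lop K k ∘ₗ Lop K k = 0 := by
  apply Finsupp.lhom_ext
  intro σ c
  simp only [LinearMap.comp_apply, LinearMap.zero_apply]
  by_cases hk : k ∈ σ
  · rw [Lop_single_mem hk, map_zero]
  · rw [Lop_single_notMem hk, map_smul, Lop_single_mem (Finset.mem_insert_self k σ),
      smul_zero]

noncomputable def LvMap (K : Type) [Field K] {n : ℕ} :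
    (Fin n → K) →ₗ[K] Module.End K (Finset (Fin n) →₀ K) where
  toFun v := ∑ k : Fin n, v k • (Lop K k : Module.End K (Finset (Fin n) →₀ K))
  map_add' v w := by simp [add_smul, Finset.sum_add_distrib]
  map_smul' c v := by simp [smul_smul, Finset.smul_sum]

lemma LvMap_sq (v : Fin n → K) : LvMap K v * LvMap K v = 0 := by
  have hA : ∀ k l : Fin n,
      (Lop K k : Module.End K (Finset (Fin n) →₀ K)) * Lop K l
        + (Lop K l : Module.End K (Finset (Fin n) →₀ K)) * Lop K k = 0 := by
    intro k l
    exact Lop_anticomm k l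
  have : LvMap K v * LvMap K v =
      ∑ p ∈ Finset.univ ×ˢ (Finset.univ : Finset (Fin n)),
        (v p.1 * v p.2) • ((Lop K p.1 : Module.End K (Finset (Fin n) →₀ K)) * Lop K p.2) := by
    rw [Finset.sum_product]
    show (∑ k : Fin n, v k • (Lop K k : Module.End K (Finset (Fin n) →₀ K))) *
      (∑ l : Fin n, v l • (Lop K l : Module.End K (Finset (Fin n) →₀ K))) = _
    rw [Finset.sum_mul_sum]
    exact Finset.sum_congr rfl fun k _ => Finset.sum_congr rfl fun l _ => by
      rw [smul_mul_smul_comm]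
  rw [this]
  apply Finset.sum_ninvolution (g := fun p => (p.2, p.1))
  · intro ⟨k, l⟩
    simp only
    rw [mul_comm (v l) (v k), ← smul_add, hA, smul_zero]
  · intro ⟨k, l⟩ hne heq
    have hlk : l = k := (Prod.mk.injEq _ _ _ _).mp heq |>.1
    subst hlk
    exact hne (by rw [show (Lop K l : Module.End K (Finset (Fin n) →₀ K)) * Lop K l = 0
      from Lop_sq l, smul_zero])
  · intro a; exact Finset.mem_product.mpr ⟨Finset.mem_univ _, Finset.mem_univ _⟩
  · intro a; rfl

noncomputable def PhiRep (K : Type) [Field K] (n : ℕ) :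
    ExtAlg K n →ₐ[K] Module.End K (Finset (Fin n) →₀ K) :=
  ExteriorAlgebra.lift K ⟨LvMap K, LvMap_sq⟩

lemma PhiRep_eb (k : Fin n) : PhiRep K n (eb K k) = Lop K k := by
  rw [PhiRep, eb, ExteriorAlgebra.lift_ι_apply]
  show ∑ l : Fin n, (Pi.single k (1 : K) : Fin n → K) l • (Lop K l : Module.End K (Finset (Fin n) →₀ K))
    = Lop K k
  rw [Finset.sum_eq_single k]
  · rw [Pi.single_eq_same, one_smul]
  · intro l _ hl
    rw [Pi.single_eq_of_ne hl, zero_smul]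
  · intro h; exact absurd (Finset.mem_univ k) h

noncomputable def evL (K : Type) [Field K] (n : ℕ) :
    ExtAlg K n →ₗ[K] (Finset (Fin n) →₀ K) :=
  (LinearMap.applyₗ (Finsupp.single (∅ : Finset (Fin n)) (1 : K))).comp
    (PhiRep K n).toLinearMap

lemma evL_apply (x : ExtAlg K n) :
    evL K n x = PhiRep K n x (Finsupp.single ∅ 1) := rfl

lemma evL_eMon (σ : Finset (Fin n)) : evL K n (eMon K n σ) = Finsupp.single σ 1 := by
  induction σ using Finset.strongInduction with
  | _ σ IH =>
  rcases σ.eq_empty_or_nonempty with rfl | hne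
  · rw [eMon_empty, evL_apply, map_one]
    rfl
  · have haσ : σ.min' hne ∈ σ := σ.min'_mem hne
    set a := σ.min' hne
    have hrest : ∀ b ∈ σ.erase a, a < b := fun b hb =>
      lt_of_le_of_ne (σ.min'_le b (Finset.mem_of_mem_erase hb))
        (Ne.symm (Finset.ne_of_mem_erase hb))
    have hMon : eMon K n σ = eb K a * eMon K n (σ.erase a) := by
      conv_lhs => rw [(Finset.insert_erase haσ).symm]
      exact eMon_insert hrest (Finset.notMem_erase _ _)
    have hIH := IH (σ.erase a) (Finset.erase_ssubset haσ)
    rw [evL_apply] at hIH ⊢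
    rw [hMon, map_mul]
    show PhiRep K n (eb K a) (PhiRep K n (eMon K n (σ.erase a)) (Finsupp.single ∅ 1)) = _
    rw [hIH, PhiRep_eb, Lop_single_notMem (Finset.notMem_erase _ _)]
    have hsgn : esgn K a (σ.erase a) = 1 := by
      rw [esgn, Finset.filter_eq_empty_iff.mpr (fun {b} hb => not_lt.mpr (hrest b hb).le),
        Finset.card_empty, pow_zero]
    rw [hsgn, one_mul, one_smul, Finset.insert_erase haσ]

lemma eMon_mem_span_iff (S : Set (Finset (Fin n))) (τ : Finset (Fin n)) :
    eMon K n τ ∈ Submodule.span K {x | ∃ σ : Finset (Fin n), σ ∈ S ∧ x = eMon K n σ}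
      ↔ τ ∈ S := by
  constructor
  · intro h
    have hmap : Submodule.map (evL K n)
        (Submodule.span K {x | ∃ σ : Finset (Fin n), σ ∈ S ∧ x = eMon K n σ})
        ≤ Finsupp.supported K K S := by
      rw [Submodule.map_span, Submodule.span_le]
      rintro y ⟨x, ⟨σ, hσ, rfl⟩, rfl⟩
      rw [evL_eMon]
      exact Finsupp.single_mem_supported K (1 : K) hσ
    have h2 : Finsupp.single τ (1 : K) ∈ Finsupp.supported K K S := by
      rw [← evL_eMon (K := K) τ]
      exact hmap ⟨_, h, rfl⟩
    have h3 := Finsupp.mem_supported K (Finsupp.single τ (1 : K)) |>.mp h2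
    rw [Finsupp.support_single_ne_zero τ one_ne_zero] at h3
    simpa using h3
  · intro h
    exact Submodule.subset_span ⟨τ, h, rfl⟩
lemma faceIdealE_eq_span (Δ : Set (Finset (Fin n)))
    (hdc : ∀ σ ∈ Δ, ∀ τ : Finset (Fin n), τ ⊆ σ → τ ∈ Δ) :
    faceIdealE K Δ
      = Submodule.span K {x | ∃ σ : Finset (Fin n), σ ∉ Δ ∧ x = eMon K n σ} := by
  apply le_antisymm
  · rw [faceIdealE, idealSpanE, Submodule.span_le]
    rintro x ⟨a, ⟨σ, hσ, rfl⟩, u, v, rfl⟩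
    have hW : Wspan K σ ≤
        Submodule.span K {x | ∃ σ : Finset (Fin n), σ ∉ Δ ∧ x = eMon K n σ} := by
      rw [Wspan, Submodule.span_le]
      rintro y ⟨τ, hτ, rfl⟩
      exact Submodule.subset_span ⟨τ, fun hc => hσ (hdc τ hc σ hτ), rfl⟩
    exact hW (mul_eMon_mul_mem_Wspan σ u v)
  · rw [Submodule.span_le]
    rintro x ⟨σ, hσ, rfl⟩
    refine Submodule.subset_span ⟨eMon K n σ, ⟨σ, hσ, rfl⟩, 1, 1, ?_⟩
    rw [one_mul, mul_one]

lemma eMon_mem_faceIdealE_iff {Δ : Set (Finset (Fin n))}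
    (hdc : ∀ σ ∈ Δ, ∀ τ : Finset (Fin n), τ ⊆ σ → τ ∈ Δ) (τ : Finset (Fin n)) :
    eMon K n τ ∈ faceIdealE K Δ ↔ τ ∉ Δ := by
  rw [faceIdealE_eq_span Δ hdc]
  exact eMon_mem_span_iff ({σ | σ ∉ Δ}) τ
open Classical in
/-- the inverse shift on non-faces -/
noncomputable def sFace {n : ℕ} (Δ : Set (Finset (Fin n))) (i j : Fin n)
    (σ : Finset (Fin n)) : Finset (Fin n) :=
  if j ∈ σ ∧ i ∉ σ ∧ insert i (σ.erase j) ∈ Δ then insert i (σ.erase j) else σ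

section Comb
variable {Δ : Set (Finset (Fin n))} {i j : Fin n}

lemma shift_disjoint (hij : i ≠ j) {τ : Finset (Fin n)} (hτ : τ ∈ shiftOp Δ i j) :
    ∀ σ : Finset (Fin n), σ ∉ Δ → τ ≠ sFace Δ i j σ := by
  rintro σ hσ rfl
  obtain ⟨ρ, hρΔ, hρ⟩ := hτ
  by_cases hs : j ∈ σ ∧ i ∉ σ ∧ insert i (σ.erase j) ∈ Δ
  · -- sFace σ = insert i (σ.erase j) =: τ
    obtain ⟨hjσ, hiσ, hins⟩ := hs
    rw [sFace, if_pos ⟨hjσ, hiσ, hins⟩] at hρ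
    have hiτ : i ∈ insert i (σ.erase j) := Finset.mem_insert_self _ _
    have hjτ : j ∉ insert i (σ.erase j) := by
      simp [Finset.mem_insert, hij.symm]
    by_cases hc : i ∈ ρ ∧ j ∉ ρ ∧ insert j (ρ.erase i) ∉ Δ
    · rw [shiftFace, if_pos hc] at hρ
      exact hjτ (hρ ▸ Finset.mem_insert_self _ _)
    · rw [shiftFace, if_neg hc] at hρ
      -- ρ = τ ∈ Δ, and shiftFace τ = τ, so insert j (τ.erase i) ∈ Δ or j ∈ τ
      subst hρ
      have h1 : (insert i (σ.erase j)).erase i = σ.erase j :=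
        Finset.erase_insert (by simp [Finset.mem_erase, hij, hiσ])
      have h2 : insert j ((insert i (σ.erase j)).erase i) = σ := by
        rw [h1, Finset.insert_erase hjσ]
      rw [h2] at hc
      push_neg at hc
      exact hσ (hc hiτ hjτ)
  · -- sFace σ = σ = τ ∉ Δ
    rw [sFace, if_neg hs] at hρ
    by_cases hc : i ∈ ρ ∧ j ∉ ρ ∧ insert j (ρ.erase i) ∉ Δ
    · rw [shiftFace, if_pos hc] at hρ
      obtain ⟨hiρ, hjρ, -⟩ := hc
      apply hs
      subst hρ
      refine ⟨Finset.mem_insert_self _ _, ?_, ?_⟩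
      · simp [Finset.mem_insert, hij, Finset.mem_erase]
      · have h1 : (insert j (ρ.erase i)).erase j = ρ.erase i :=
          Finset.erase_insert (by simp [Finset.mem_erase, hjρ])
        rw [h1, Finset.insert_erase hiρ]
        exact hρΔ
    · rw [shiftFace, if_neg hc] at hρ
      exact hσ (hρ ▸ hρΔ)

lemma shift_exhaust (hij : i ≠ j) {τ : Finset (Fin n)} (hτ : τ ∉ shiftOp Δ i j) :
    ∃ σ : Finset (Fin n), σ ∉ Δ ∧ τ = sFace Δ i j σ := by
  by_cases hτΔ : τ ∈ Δ
  · -- shiftFace τ ≠ τ, so condition holds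
    have hcond : i ∈ τ ∧ j ∉ τ ∧ insert j (τ.erase i) ∉ Δ := by
      by_contra hc
      exact hτ ⟨τ, hτΔ, by rw [shiftFace, if_neg hc]⟩
    obtain ⟨hiτ, hjτ, hins⟩ := hcond
    refine ⟨insert j (τ.erase i), hins, ?_⟩
    have hji : j ∈ insert j (τ.erase i) := Finset.mem_insert_self _ _
    have hii : i ∉ insert j (τ.erase i) := by
      simp [Finset.mem_insert, hij, Finset.mem_erase]
    have h1 : (insert j (τ.erase i)).erase j = τ.erase i :=
      Finset.erase_insert (by simp [Finset.mem_erase, hjτ])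
    have h2 : insert i ((insert j (τ.erase i)).erase j) = τ := by
      rw [h1, Finset.insert_erase hiτ]
    rw [sFace, if_pos ⟨hji, hii, by rw [h2]; exact hτΔ⟩, h2]
  · by_cases hS : j ∈ τ ∧ i ∉ τ ∧ insert i (τ.erase j) ∈ Δ
    · -- contradiction: τ ∈ shiftOp via insert i (τ.erase j)
      exfalso
      obtain ⟨hjτ, hiτ, hins⟩ := hS
      apply hτ
      refine ⟨insert i (τ.erase j), hins, ?_⟩
      have h1 : (insert i (τ.erase j)).erase i = τ.erase j :=
        Finset.erase_insert (by simp [Finset.mem_erase, hij, hiτ])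
      have h2 : insert j ((insert i (τ.erase j)).erase i) = τ := by
        rw [h1, Finset.insert_erase hjτ]
      have hcond : i ∈ insert i (τ.erase j) ∧ j ∉ insert i (τ.erase j) ∧
          insert j ((insert i (τ.erase j)).erase i) ∉ Δ := by
        refine ⟨Finset.mem_insert_self _ _, ?_, by rw [h2]; exact hτΔ⟩
        simp [Finset.mem_insert, hij.symm, Finset.mem_erase]
      rw [shiftFace, if_pos hcond, h2]
    · exact ⟨τ, hτΔ, by rw [sFace, if_neg hS]⟩

lemma shift_compl (hij : i ≠ j) (τ : Finset (Fin n)) :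
    τ ∉ shiftOp Δ i j ↔ ∃ σ : Finset (Fin n), σ ∉ Δ ∧ τ = sFace Δ i j σ := by
  constructor
  · exact shift_exhaust hij
  · rintro ⟨σ, hσ, rfl⟩ h
    exact shift_disjoint hij h σ hσ rfl

end Comb

lemma shiftOp_downclosed {Δ : Set (Finset (Fin n))}
    (hdc : ∀ σ ∈ Δ, ∀ τ : Finset (Fin n), τ ⊆ σ → τ ∈ Δ) {i j : Fin n} (hij : i ≠ j) :
    ∀ τ ∈ shiftOp Δ i j, ∀ ρ : Finset (Fin n), ρ ⊆ τ → ρ ∈ shiftOp Δ i j := by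
  rintro τ ⟨σ₀, hσ₀, rfl⟩ ρ hρ
  by_cases hc : i ∈ σ₀ ∧ j ∉ σ₀ ∧ insert j (σ₀.erase i) ∉ Δ
  · -- shifted case : τ = insert j (σ₀.erase i)
    obtain ⟨hiσ, hjσ, hins⟩ := hc
    rw [shiftFace, if_pos ⟨hiσ, hjσ, hins⟩] at hρ
    have hiτ : i ∉ insert j (σ₀.erase i) := by
      simp [Finset.mem_insert, hij, Finset.mem_erase]
    have hiρ : i ∉ ρ := fun h => hiτ (hρ h)
    by_cases hjρ : j ∈ ρ
    · set ρ₀ := insert i (ρ.erase j) with hρ₀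
      have hρ₀σ : ρ₀ ⊆ σ₀ := by
        intro x hx
        rcases Finset.mem_insert.mp hx with rfl | hx
        · exact hiσ
        · obtain ⟨hxj, hxρ⟩ := Finset.mem_erase.mp hx
          rcases Finset.mem_insert.mp (hρ hxρ) with rfl | hx2
          · exact absurd rfl hxj
          · exact Finset.mem_of_mem_erase hx2
      have hρ₀Δ : ρ₀ ∈ Δ := hdc σ₀ hσ₀ ρ₀ hρ₀σ
      by_cases hρΔ : ρ ∈ Δ
      · exact ⟨ρ, hρΔ, by rw [shiftFace, if_neg (by simp [hiρ])]⟩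
      · refine ⟨ρ₀, hρ₀Δ, ?_⟩
        have h1 : ρ₀.erase i = ρ.erase j :=
          Finset.erase_insert (by simp [Finset.mem_erase, hiρ])
        have h2 : insert j (ρ₀.erase i) = ρ := by rw [h1, Finset.insert_erase hjρ]
        have hjρ₀ : j ∉ ρ₀ := by
          intro h
          exact hjσ (hρ₀σ h)
        rw [shiftFace, if_pos ⟨Finset.mem_insert_self _ _, hjρ₀,
          by rw [h2]; exact hρΔ⟩, h2]
    · -- j ∉ ρ : ρ ⊆ σ₀
      have hρσ : ρ ⊆ σ₀ := by
        intro x hx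
        rcases Finset.mem_insert.mp (hρ hx) with rfl | hx2
        · exact absurd hx hjρ
        · exact Finset.mem_of_mem_erase hx2
      exact ⟨ρ, hdc σ₀ hσ₀ ρ hρσ, by rw [shiftFace, if_neg (by simp [hiρ])]⟩
  · -- identity case : τ = σ₀
    rw [shiftFace, if_neg hc] at hρ
    have hρΔ : ρ ∈ Δ := hdc σ₀ hσ₀ ρ hρ
    refine ⟨ρ, hρΔ, ?_⟩
    rw [shiftFace, if_neg ?_]
    rintro ⟨hiρ, hjρ, hinsρ⟩
    push_neg at hc
    rcases Classical.em (j ∈ σ₀) with hjσ | hjσ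
    · -- insert j (ρ.erase i) ⊆ σ₀
      apply hinsρ
      apply hdc σ₀ hσ₀
      intro x hx
      rcases Finset.mem_insert.mp hx with rfl | hx
      · exact hjσ
      · exact hρ (Finset.mem_of_mem_erase hx)
    · have hσ' : insert j (σ₀.erase i) ∈ Δ := hc (hρ hiρ) hjσ
      apply hinsρ
      apply hdc _ hσ'
      intro x hx
      rcases Finset.mem_insert.mp hx with rfl | hx
      · exact Finset.mem_insert_self _ _
      · obtain ⟨hxi, hxρ⟩ := Finset.mem_erase.mp hx
        exact Finset.mem_insert_of_mem (Finset.mem_erase.mpr ⟨hxi, hρ hxρ⟩)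

/-- **Lemma 2.3 (b).** Let `Δ` be a simplicial complex on `[n]` and `J_Δ` its
exterior face ideal, and `1 ≤ i < j ≤ n`. Then `(J_Δ)_{ij}(0) = J_{Shift_{ij}(Δ)}`. -/
theorem shiftImageE_faceIdealE (K : Type) [Field K] (n : ℕ)
    (Δ : Set (Finset (Fin n))) (hΔ : IsSimplicialComplex Δ)
    (i j : Fin n) (hij : i < j) :
    shiftImageE (faceIdealE K Δ) i j (0 : K) = faceIdealE K (shiftOp Δ i j) := by
  have hdc := hΔ.2
  have hij' : i ≠ j := hij.ne
  have hmem : ∀ ρ : Finset (Fin n), eMon K n ρ ∈ faceIdealE K Δ ↔ ρ ∉ Δ :=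
    eMon_mem_faceIdealE_iff hdc
  have hdc' := shiftOp_downclosed (i := i) (j := j) hdc hij'
  have hSt : ∀ σ : Finset (Fin n),
      StVal (faceIdealE K Δ) i j (0 : K) σ = eMon K n (sFace Δ i j σ) := by
    intro σ
    by_cases h : j ∈ σ ∧ i ∉ σ ∧ insert i (σ.erase j) ∈ Δ
    · obtain ⟨h1, h2, h3⟩ := h
      have h3' : eMon K n (insert i (σ.erase j)) ∉ faceIdealE K Δ := by
        rw [hmem]
        exact not_not.mpr h3
      rw [StVal, if_pos ⟨h1, h2, h3'⟩, sFace, if_pos ⟨h1, h2, h3⟩, zero_smul, add_zero]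
    · have h' : ¬ (j ∈ σ ∧ i ∉ σ ∧ eMon K n (insert i (σ.erase j)) ∉ faceIdealE K Δ) := by
        intro ⟨h1, h2, h3⟩
        exact h ⟨h1, h2, not_not.mp ((hmem _).not.mp h3)⟩
      rw [StVal, if_neg h', sFace, if_neg h]
  have hset : {x | ∃ σ : Finset (Fin n), eMon K n σ ∈ faceIdealE K Δ ∧
      x = StVal (faceIdealE K Δ) i j (0 : K) σ}
      = {x | ∃ ρ : Finset (Fin n), ρ ∉ shiftOp Δ i j ∧ x = eMon K n ρ} := by
    ext x
    constructor
    · rintro ⟨σ, hσ, rfl⟩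
      rw [hmem] at hσ
      exact ⟨sFace Δ i j σ, (shift_compl hij' _).mpr ⟨σ, hσ, rfl⟩, (hSt σ).symm ▸ rfl⟩
    · rintro ⟨ρ, hρ, rfl⟩
      obtain ⟨σ, hσ, rfl⟩ := shift_exhaust hij' hρ
      exact ⟨σ, (hmem σ).mpr hσ, (hSt σ).symm⟩
  rw [shiftImageE, hset, ← faceIdealE_eq_span _ hdc']
end

section
/- Let Δ be a simplicial complex on [n], 1 ≤ i < j ≤ n, Γ = Shift_{ij}(Δ), and W ⊂ [n]∖{i,j}. Set Δ_1 = Δ_{W∪{i}}, Δ_2 = Δ_{W∪{j}}, Γ_1 = Γ_{W∪{i}}, Γ_2 = Γ_{W∪{j}}. Then Δ_1 ∩ Δ_2 = Γ_1 ∩ Γ_2 = Δ_W = Γ_W, and Γ_1 ∪ Γ_2 = Shift_{ij}(Δ_1 ∪ Δ_2). -/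
/-- A collection of faces is closed under passing to subsets. -/
def DownClosed {n : ℕ} (Δ : Set (Finset (Fin n))) : Prop :=
  ∀ σ ∈ Δ, ∀ τ : Finset (Fin n), τ ⊆ σ → τ ∈ Δ

/-- The induced subcomplex `Δ_W = {σ ∈ Δ : σ ⊆ W}`. -/
def restrictC {n : ℕ} (Δ : Set (Finset (Fin n))) (W : Finset (Fin n)) :
    Set (Finset (Fin n)) :=
  {σ | σ ∈ Δ ∧ σ ⊆ W}

/-- The space of simplicial `(c-1)`-chains of `Δ` with coefficients in `K`, spanned
by the faces of `Δ` of cardinality `c` (including the empty face when `c = 0`,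
which yields the *reduced* chain complex). -/
abbrev SimplicialChain (K : Type) [Field K] {n : ℕ} (Δ : Set (Finset (Fin n)))
    (c : ℕ) : Type :=
  {σ : Finset (Fin n) // σ ∈ Δ ∧ σ.card = c} → K

open Classical in
/-- The simplicial boundary map (from chains spanned by cardinality-`(c+1)` faces to
chains spanned by cardinality-`c` faces). -/
noncomputable def simplicialBoundary (K : Type) [Field K] {n : ℕ}
    (Δ : Set (Finset (Fin n))) (c : ℕ) :
    SimplicialChain K Δ (c + 1) →ₗ[K] SimplicialChain K Δ c where
  toFun f τ := ∑ k : Fin n,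
    if h : k ∉ τ.1 ∧ insert k τ.1 ∈ Δ then
      ((-1 : K) ^ ((τ.1.filter (fun l => l < k)).card)) •
        f ⟨insert k τ.1, h.2, by rw [Finset.card_insert_of_notMem h.1, τ.2.2]⟩
    else 0
  map_add' f g := by
    funext τ
    simp only [Pi.add_apply]
    rw [← Finset.sum_add_distrib]
    refine Finset.sum_congr rfl fun k _ => ?_
    split
    · simp only [Pi.add_apply, smul_add]
    · simp
  map_smul' a f := by
    funext τ
    simp only [Pi.smul_apply, RingHom.id_apply]
    rw [Finset.smul_sum]
    refine Finset.sum_congr rfl fun k _ => ?_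
    split
    · simp only [Pi.smul_apply, smul_comm a]
    · simp

/-- The space of (reduced) simplicial cycles in the chain space spanned by the
cardinality-`c` faces. -/
noncomputable def simplicialCycles (K : Type) [Field K] {n : ℕ}
    (Δ : Set (Finset (Fin n))) (c : ℕ) : Submodule K (SimplicialChain K Δ c) :=
  match c with
  | 0 => ⊤
  | (d + 1) => LinearMap.ker (simplicialBoundary K Δ d)

/-- The reduced simplicial homology `H̃_{c-1}(Δ; K)`: cycles modulo boundaries in the
chain space spanned by the cardinality-`c` faces of `Δ`. -/
abbrev reducedHomology (K : Type) [Field K] {n : ℕ} (Δ : Set (Finset (Fin n)))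
    (c : ℕ) : Type :=
  simplicialCycles K Δ c ⧸
    Submodule.comap (simplicialCycles K Δ c).subtype
      (LinearMap.range (simplicialBoundary K Δ c))

open Classical in
/-- The chain map induced by an inclusion of complexes `Δ' ⊆ Δ''` (extension by
zero of the dual-basis description; on faces it is the evident inclusion). -/
noncomputable def extendChain (K : Type) [Field K] {n : ℕ}
    {Δ' Δ'' : Set (Finset (Fin n))} (h : Δ' ⊆ Δ'') (c : ℕ) :
    SimplicialChain K Δ' c →ₗ[K] SimplicialChain K Δ'' c where
  toFun f τ := if hτ : τ.1 ∈ Δ' then f ⟨τ.1, hτ, τ.2.2⟩ else 0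
  map_add' f g := by
    funext τ
    by_cases hτ : τ.1 ∈ Δ' <;> simp [hτ]
  map_smul' a f := by
    funext τ
    by_cases hτ : τ.1 ∈ Δ' <;> simp [hτ]

theorem boundary_extendChain (K : Type) [Field K] {n : ℕ}
    {Δ' Δ'' : Set (Finset (Fin n))} (h : Δ' ⊆ Δ'') (hdc : DownClosed Δ') (c : ℕ)
    (f : SimplicialChain K Δ' (c + 1)) :
    simplicialBoundary K Δ'' c (extendChain K h (c + 1) f) =
      extendChain K h c (simplicialBoundary K Δ' c f) := by
  funext τ
  simp only [simplicialBoundary, extendChain, LinearMap.coe_mk, AddHom.coe_mk]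
  by_cases hτ : τ.1 ∈ Δ'
  · rw [dif_pos hτ]
    refine Finset.sum_congr rfl fun k _ => ?_
    by_cases hins : insert k τ.1 ∈ Δ'
    · have hins'' : insert k τ.1 ∈ Δ'' := h hins
      by_cases hk : k ∈ τ.1
      · rw [dif_neg (by tauto), dif_neg (by tauto)]
      · rw [dif_pos ⟨hk, hins''⟩, dif_pos hins, dif_pos ⟨hk, hins⟩]
    · by_cases hcond : k ∉ τ.1 ∧ insert k τ.1 ∈ Δ''
      · rw [dif_pos hcond, dif_neg hins, smul_zero,
          dif_neg (show ¬(k ∉ τ.1 ∧ insert k τ.1 ∈ Δ') by tauto)]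
      · rw [dif_neg hcond,
          dif_neg (show ¬(k ∉ τ.1 ∧ insert k τ.1 ∈ Δ') by tauto)]
  · rw [dif_neg hτ]
    refine Finset.sum_eq_zero fun k _ => ?_
    by_cases hcond : k ∉ τ.1 ∧ insert k τ.1 ∈ Δ''
    · rw [dif_pos hcond]
      have hnot : insert k τ.1 ∉ Δ' := fun hmem =>
        hτ (hdc _ hmem _ (Finset.subset_insert _ _))
      rw [dif_neg hnot, smul_zero]
    · rw [dif_neg hcond]

theorem extend_mem_cycles (K : Type) [Field K] {n : ℕ}
    {Δ' Δ'' : Set (Finset (Fin n))} (h : Δ' ⊆ Δ'') (hdc : DownClosed Δ') (c : ℕ) :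
    ∀ x ∈ simplicialCycles K Δ' c, extendChain K h c x ∈ simplicialCycles K Δ'' c := by
  intro x hx
  cases c with
  | zero => trivial
  | succ d =>
    have hx' : simplicialBoundary K Δ' d x = 0 := hx
    show simplicialBoundary K Δ'' d (extendChain K h (d + 1) x) = 0
    rw [boundary_extendChain K h hdc d x, hx', map_zero]

/-- The map `H̃_{c-1}(Δ'; K) → H̃_{c-1}(Δ''; K)` induced on reduced simplicial
homology by an inclusion of complexes `Δ' ⊆ Δ''`. -/
noncomputable def inducedHomologyMap (K : Type) [Field K] {n : ℕ}
    {Δ' Δ'' : Set (Finset (Fin n))} (h : Δ' ⊆ Δ'') (hdc : DownClosed Δ') (c : ℕ) :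
    reducedHomology K Δ' c →ₗ[K] reducedHomology K Δ'' c :=
  Submodule.mapQ _ _
    (LinearMap.restrict (extendChain K h c) (extend_mem_cycles K h hdc c))
    (by
      intro x hx
      simp only [Submodule.mem_comap, Submodule.coe_subtype, LinearMap.mem_range] at hx ⊢
      obtain ⟨u, hu⟩ := hx
      refine ⟨extendChain K h (c + 1) u, ?_⟩
      have : (LinearMap.restrict (extendChain K h c)
          (extend_mem_cycles K h hdc c) x : SimplicialChain K Δ'' c) =
          extendChain K h c (x : SimplicialChain K Δ' c) := rfl
      rw [this, ← hu, boundary_extendChain K h hdc c u])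

/-- The first map `H̃_k(Δ_W) → H̃_k(Δ_1) ⊕ H̃_k(Δ_2)`, `x ↦ (i_*(x), −j_*(x))`,
appearing in the reduced Mayer–Vietoris exact sequence (here `Δ_W = Δ_1 ∩ Δ_2`). -/
noncomputable def mayerVietorisMap (K : Type) [Field K] {n : ℕ}
    {ΔW Δ₁ Δ₂ : Set (Finset (Fin n))} (h₁ : ΔW ⊆ Δ₁) (h₂ : ΔW ⊆ Δ₂)
    (hdc : DownClosed ΔW) (c : ℕ) :
    reducedHomology K ΔW c →ₗ[K]
      (reducedHomology K Δ₁ c) × (reducedHomology K Δ₂ c) :=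
  LinearMap.prod (inducedHomologyMap K h₁ hdc c) (-(inducedHomologyMap K h₂ hdc c))

/-!
`C_{ij}` either fixes a face or trades `i` for `j` in it. Hence for any family `F` of faces
that contains `σ` exactly when it contains `(σ ∖ {i}) ∪ {j}` (for `i ∈ σ`, `j ∉ σ`), shifting
commutes with intersecting by `F`: `Shift_{ij}(Δ ∩ F) = Shift_{ij}(Δ) ∩ F`. Both
`{σ | σ ⊆ W}` and `{σ | σ ⊆ W ∪ {i} ∨ σ ⊆ W ∪ {j}}` are such families, and on the first one
`Shift_{ij}` is the identity because no face contains `i`.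
-/

section Shifting

variable {n : ℕ} {Δ F : Set (Finset (Fin n))} {i j : Fin n} {σ : Finset (Fin n)}

def IsShiftStable (F : Set (Finset (Fin n))) (i j : Fin n) : Prop :=
  ∀ σ : Finset (Fin n), i ∈ σ → j ∉ σ → (insert j (σ.erase i) ∈ F ↔ σ ∈ F)

theorem shiftFace_of_notMem (hi : i ∉ σ) : shiftFace Δ i j σ = σ :=
  if_neg fun h => hi h.1

theorem shiftFace_mem_iff (hF : IsShiftStable F i j) : shiftFace Δ i j σ ∈ F ↔ σ ∈ F := by
  unfold shiftFace
  split_ifs with h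
  exacts [hF σ h.1 h.2.1, Iff.rfl]

theorem shiftFace_inter (hF : IsShiftStable F i j) (hσ : σ ∈ F) :
    shiftFace (Δ ∩ F) i j σ = shiftFace Δ i j σ := by
  unfold shiftFace
  congr 1
  exact propext <| and_congr_right fun hi => and_congr_right fun hj =>
    not_congr (and_iff_left ((hF σ hi hj).2 hσ))

theorem shiftOp_inter (hF : IsShiftStable F i j) :
    shiftOp (Δ ∩ F) i j = shiftOp Δ i j ∩ F := by
  ext ρ
  constructor
  · rintro ⟨σ, ⟨hσΔ, hσF⟩, rfl⟩
    rw [shiftFace_inter hF hσF]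
    exact ⟨⟨σ, hσΔ, rfl⟩, (shiftFace_mem_iff hF).2 hσF⟩
  · rintro ⟨⟨σ, hσΔ, rfl⟩, hρF⟩
    have hσF := (shiftFace_mem_iff hF).1 hρF
    exact ⟨σ, ⟨hσΔ, hσF⟩, shiftFace_inter hF hσF⟩

theorem shiftOp_eq_self (h : ∀ σ ∈ Δ, i ∉ σ) : shiftOp Δ i j = Δ :=
  Set.EqOn.image_eq_self fun σ hσ => shiftFace_of_notMem (h σ hσ)

end Shifting

section Restriction

variable {n : ℕ} {Δ : Set (Finset (Fin n))} {i j : Fin n} {U V W : Finset (Fin n)}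

theorem restrictC_eq_inter : restrictC Δ U = Δ ∩ {σ | σ ⊆ U} := rfl

theorem restrictC_inter_restrictC :
    restrictC Δ U ∩ restrictC Δ V = restrictC Δ (U ∩ V) := by
  ext σ
  simp only [restrictC, Set.mem_inter_iff, Set.mem_ofPred_eq, Finset.subset_inter_iff]
  tauto

theorem restrictC_union_restrictC :
    restrictC Δ U ∪ restrictC Δ V = Δ ∩ {σ | σ ⊆ U ∨ σ ⊆ V} :=
  (Set.inter_union_distrib_left _ _ _).symm

theorem isShiftStable_subset (hi : i ∉ W) (hj : j ∉ W) : IsShiftStable {σ | σ ⊆ W} i j :=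
  fun _ hiσ _ => iff_of_false (fun h => hj (h (Finset.mem_insert_self j _)))
    (fun h => hi (h hiσ))

theorem isShiftStable_subset_insert_or_subset_insert (hij : i ≠ j) (hi : i ∉ W) (hj : j ∉ W) :
    IsShiftStable {σ | σ ⊆ insert i W ∨ σ ⊆ insert j W} i j := by
  intro σ hiσ hjσ
  have hL : ¬insert j (σ.erase i) ⊆ insert i W := fun h => by
    simpa [hij.symm, hj] using h (Finset.mem_insert_self j _)
  have hR : ¬σ ⊆ insert j W := fun h => by simpa [hij, hi] using h hiσ
  simp only [Set.mem_ofPred_eq, hL, hR, false_or, or_false]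
  rw [Finset.insert_subset_insert_iff fun h => hjσ (Finset.mem_of_mem_erase h),
    Finset.subset_insert_iff]

theorem restrictC_insert_inter_restrictC_insert (hij : i ≠ j) (hi : i ∉ W) (hj : j ∉ W) :
    restrictC Δ (insert i W) ∩ restrictC Δ (insert j W) = restrictC Δ W := by
  have hi' : i ∉ insert j W := by simp [hij, hi]
  rw [restrictC_inter_restrictC, Finset.insert_inter_of_notMem hi',
    Finset.inter_insert_of_notMem hj, Finset.inter_self]

theorem restrictC_shiftOp (hi : i ∉ W) (hj : j ∉ W) :
    restrictC (shiftOp Δ i j) W = restrictC Δ W := by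
  rw [restrictC_eq_inter, restrictC_eq_inter, ← shiftOp_inter (isShiftStable_subset hi hj),
    shiftOp_eq_self]
  exact fun σ hσ hiσ => hi (hσ.2 hiσ)

end Restriction

theorem restrict_shiftOp_identities_general (n : ℕ) (Δ : Set (Finset (Fin n)))
    (i j : Fin n) (hij : i < j)
    (W : Finset (Fin n)) (hiW : i ∉ W) (hjW : j ∉ W) :
    restrictC Δ (insert i W) ∩ restrictC Δ (insert j W) =
        restrictC (shiftOp Δ i j) (insert i W) ∩ restrictC (shiftOp Δ i j) (insert j W) ∧
      restrictC (shiftOp Δ i j) (insert i W) ∩ restrictC (shiftOp Δ i j) (insert j W) =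
        restrictC Δ W ∧
      restrictC Δ W = restrictC (shiftOp Δ i j) W ∧
      restrictC (shiftOp Δ i j) (insert i W) ∪ restrictC (shiftOp Δ i j) (insert j W) =
        shiftOp (restrictC Δ (insert i W) ∪ restrictC Δ (insert j W)) i j := by
  have hcap (Θ : Set (Finset (Fin n))) :=
    restrictC_insert_inter_restrictC_insert (Δ := Θ) hij.ne hiW hjW
  have hW : restrictC Δ W = restrictC (shiftOp Δ i j) W := (restrictC_shiftOp hiW hjW).symm
  refine ⟨by rw [hcap, hcap, hW], by rw [hcap, hW], hW, ?_⟩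
  rw [restrictC_union_restrictC, restrictC_union_restrictC,
    shiftOp_inter (isShiftStable_subset_insert_or_subset_insert hij.ne hiW hjW)]

/-- **The identities preceding Lemma 3.2.** Let `Δ` be a simplicial complex on
`[n]`, `1 ≤ i < j ≤ n`, `Γ = Shift_{ij}(Δ)` and `W ⊆ [n]∖{i,j}`. With
`Δ₁ = Δ_{W∪{i}}`, `Δ₂ = Δ_{W∪{j}}`, `Γ₁ = Γ_{W∪{i}}`, `Γ₂ = Γ_{W∪{j}}` one has
`Δ₁ ∩ Δ₂ = Γ₁ ∩ Γ₂ = Δ_W = Γ_W` and `Γ₁ ∪ Γ₂ = Shift_{ij}(Δ₁ ∪ Δ₂)`. -/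
theorem restrict_shiftOp_identities (n : ℕ) (Δ : Set (Finset (Fin n)))
    (hΔ : IsSimplicialComplex Δ) (i j : Fin n) (hij : i < j)
    (W : Finset (Fin n)) (hiW : i ∉ W) (hjW : j ∉ W) :
    restrictC Δ (insert i W) ∩ restrictC Δ (insert j W) =
        restrictC (shiftOp Δ i j) (insert i W) ∩ restrictC (shiftOp Δ i j) (insert j W) ∧
      restrictC (shiftOp Δ i j) (insert i W) ∩ restrictC (shiftOp Δ i j) (insert j W) =
        restrictC Δ W ∧
      restrictC Δ W = restrictC (shiftOp Δ i j) W ∧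
      restrictC (shiftOp Δ i j) (insert i W) ∪ restrictC (shiftOp Δ i j) (insert j W) =
        shiftOp (restrictC Δ (insert i W) ∪ restrictC Δ (insert j W)) i j :=
  restrict_shiftOp_identities_general n Δ i j hij W hiW hjW
end

section
/- Let Δ be a simplicial complex on [n], 1 ≤ i < j ≤ n, Γ = Shift_{ij}(Δ), and W ⊂ [n]∖{i,j}. Set Δ_1 = Δ_{W∪{i}}, Δ_2 = Δ_{W∪{j}}, Γ_1 = Γ_{W∪{i}}, Γ_2 = Γ_{W∪{j}}, so that Δ_1 ∩ Δ_2 = Γ_1 ∩ Γ_2 = Δ_W = Γ_W. Let ∂_{1,k} : H̃_k(Δ_W;K) → H̃_k(Δ_1;K) ⊕ H̃_k(Δ_2;K) and ∂'_{1,k} : H̃_k(Γ_W;K) → H̃_k(Γ_1;K) ⊕ H̃_k(Γ_2;K) be the maps appearing in the reduced Mayer–Vietoris exact sequences of the pairs (Δ_1, Δ_2) and (Γ_1, Γ_2). Then Ker(∂'_{1,k}) ⊂ Ker(∂_{1,k}) for all k. -/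
section ChainCoefficients

open Classical

variable {K : Type} [Field K] {n : ℕ}

noncomputable def chainCoeff {Δ : Set (Finset (Fin n))} {c : ℕ} :
    SimplicialChain K Δ c →ₗ[K] (Finset (Fin n) → K) where
  toFun f σ := if h : σ ∈ Δ ∧ σ.card = c then f ⟨σ, h⟩ else 0
  map_add' f g := by
    funext σ
    by_cases h : σ ∈ Δ ∧ σ.card = c <;> simp [h]
  map_smul' a f := by
    funext σ
    by_cases h : σ ∈ Δ ∧ σ.card = c <;> simp [h]

theorem chainCoeff_of_mem {Δ : Set (Finset (Fin n))} {c : ℕ} (f : SimplicialChain K Δ c)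
    {σ : Finset (Fin n)} (hσ : σ ∈ Δ ∧ σ.card = c) : chainCoeff f σ = f ⟨σ, hσ⟩ :=
  dif_pos hσ

theorem chainCoeff_of_notMem {Δ : Set (Finset (Fin n))} {c : ℕ} (f : SimplicialChain K Δ c)
    {σ : Finset (Fin n)} (hσ : ¬(σ ∈ Δ ∧ σ.card = c)) : chainCoeff f σ = 0 :=
  dif_neg hσ

theorem chainCoeff_injective {Δ : Set (Finset (Fin n))} {c : ℕ} :
    Function.Injective (chainCoeff : SimplicialChain K Δ c → Finset (Fin n) → K) :=
  fun f g h => funext fun σ => by rw [← chainCoeff_of_mem f σ.2, ← chainCoeff_of_mem g σ.2, h]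

theorem chainCoeff_extendChain {Δ' Δ'' : Set (Finset (Fin n))} (h : Δ' ⊆ Δ'') {c : ℕ}
    (f : SimplicialChain K Δ' c) : chainCoeff (extendChain K h c f) = chainCoeff f := by
  funext σ
  simp only [chainCoeff, extendChain, LinearMap.coe_mk, AddHom.coe_mk]
  by_cases hσ : σ ∈ Δ'
  · by_cases hc : σ.card = c <;> simp [hσ, hc, h hσ]
  · simp [hσ]

theorem extendChain_extendChain {Δ₁ Δ₂ Δ₃ : Set (Finset (Fin n))} (h₁₂ : Δ₁ ⊆ Δ₂)
    (h₂₃ : Δ₂ ⊆ Δ₃) {c : ℕ} (f : SimplicialChain K Δ₁ c) :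
    extendChain K h₂₃ c (extendChain K h₁₂ c f) = extendChain K (h₁₂.trans h₂₃) c f :=
  chainCoeff_injective (by simp only [chainCoeff_extendChain])

theorem chainCoeff_simplicialBoundary {Δ : Set (Finset (Fin n))} (hΔ : DownClosed Δ) {c : ℕ}
    (f : SimplicialChain K Δ (c + 1)) (τ : Finset (Fin n)) :
    chainCoeff (simplicialBoundary K Δ c f) τ =
      ∑ k, if k ∉ τ then (-1 : K) ^ (τ.filter (· < k)).card • chainCoeff f (insert k τ)
        else 0 := by
  by_cases hτ : τ ∈ Δ ∧ τ.card = c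
  · rw [chainCoeff_of_mem _ hτ]
    simp only [simplicialBoundary, LinearMap.coe_mk, AddHom.coe_mk]
    refine Finset.sum_congr rfl fun k _ => ?_
    by_cases hk : k ∉ τ
    · have hcard : (insert k τ).card = c + 1 := by rw [Finset.card_insert_of_notMem hk, hτ.2]
      by_cases hkτ : insert k τ ∈ Δ
      · rw [dif_pos ⟨hk, hkτ⟩, if_pos hk, chainCoeff_of_mem f ⟨hkτ, hcard⟩]
      · rw [dif_neg (fun h => hkτ h.2), if_pos hk,
          chainCoeff_of_notMem f (fun h => hkτ h.1), smul_zero]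
    · rw [dif_neg (fun h => hk h.1), if_neg hk]
  · rw [chainCoeff_of_notMem _ hτ]
    refine (Finset.sum_eq_zero fun k _ => ?_).symm
    split_ifs with hk
    · rfl
    · refine smul_eq_zero_of_right _ (chainCoeff_of_notMem f ?_)
      rintro ⟨hkτ, hcard⟩
      rw [Finset.card_insert_of_notMem hk, Nat.add_right_cancel_iff] at hcard
      exact hτ ⟨hΔ _ hkτ _ (Finset.subset_insert k τ), hcard⟩

end ChainCoefficients

section PermutationChainMap

variable {n : ℕ}

/-- The sign of the permutation sorting `e a₁, …, e aₘ`, where `a₁ < ⋯ < aₘ` are the elements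
of `σ`: relabelling the vertices of an oriented simplex by `e` multiplies it by this sign. -/
def inversionSign (K : Type) [CommRing K] (e : Equiv.Perm (Fin n)) (σ : Finset (Fin n)) : K :=
  ∏ a ∈ σ, ∏ b ∈ σ, if a < b ∧ e b < e a then -1 else 1

theorem pow_card_filter {M ι : Type*} [CommMonoid M] (b : M) (s : Finset ι)
    (p : ι → Prop) [DecidablePred p] :
    b ^ (s.filter p).card = ∏ a ∈ s, if p a then b else 1 := by
  rw [← Finset.prod_const, Finset.prod_filter]

theorem inversionSign_insert (K : Type) [CommRing K] (e : Equiv.Perm (Fin n))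
    {σ : Finset (Fin n)} {k : Fin n} (hk : k ∉ σ) :
    inversionSign K e (insert k σ) = inversionSign K e σ *
      ∏ a ∈ σ, (if a < k ∧ e k < e a then -1 else 1) * (if k < a ∧ e a < e k then -1 else 1) := by
  unfold inversionSign
  rw [Finset.prod_insert hk, Finset.prod_insert hk,
    Finset.prod_congr rfl fun a _ => Finset.prod_insert hk]
  simp only [lt_irrefl, false_and, if_false, one_mul, Finset.prod_mul_distrib]
  ring

theorem inversionSign_pair (K : Type) [CommRing K] (e : Equiv.Perm (Fin n)) {a k : Fin n}
    (hak : a ≠ k) :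
    (if a < k ∧ e k < e a then (-1 : K) else 1) * (if k < a ∧ e a < e k then -1 else 1) *
      (if e a < e k then -1 else 1) = if a < k then -1 else 1 := by
  rcases hak.lt_or_gt with h | h <;> rcases (e.injective.ne hak).lt_or_gt with h' | h' <;>
    simp [h, h', lt_asymm h, lt_asymm h']

theorem inversionSign_insert_mul (K : Type) [CommRing K] (e : Equiv.Perm (Fin n))
    {σ : Finset (Fin n)} {k : Fin n} (hk : k ∉ σ) :
    inversionSign K e (insert k σ) * (-1) ^ ((σ.map e.toEmbedding).filter (· < e k)).card =
      inversionSign K e σ * (-1) ^ (σ.filter (· < k)).card := by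
  rw [inversionSign_insert K e hk, Finset.filter_map, Finset.card_map, pow_card_filter,
    pow_card_filter, mul_assoc, ← Finset.prod_mul_distrib]
  congr 1
  exact Finset.prod_congr rfl fun a ha => inversionSign_pair K e (ne_of_mem_of_not_mem ha hk)

theorem inversionSign_eq_one (K : Type) [CommRing K] {e : Equiv.Perm (Fin n)}
    {σ : Finset (Fin n)} (he : ∀ a ∈ σ, e a = a) : inversionSign K e σ = 1 :=
  Finset.prod_eq_one fun a ha => Finset.prod_eq_one fun b hb => by
    rw [he a ha, he b hb, if_neg fun h => lt_asymm h.1 h.2]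

theorem map_eq_self_of_forall_apply_eq {e : Equiv.Perm (Fin n)} {σ : Finset (Fin n)}
    (he : ∀ a ∈ σ, e a = a) : σ.map e.toEmbedding = σ := by
  rw [Finset.map_eq_image, Equiv.coe_toEmbedding, Finset.image_congr (g := id) he, Finset.image_id]

variable (K : Type) [Field K]

noncomputable def permChainMap (e : Equiv.Perm (Fin n)) {A : Set (Finset (Fin n))}
    (B : Set (Finset (Fin n))) (c : ℕ) : SimplicialChain K A c →ₗ[K] SimplicialChain K B c where
  toFun f σ := inversionSign K e (σ.1.map e.symm.toEmbedding) *
    chainCoeff f (σ.1.map e.symm.toEmbedding)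
  map_add' f g := by
    funext σ
    simp [mul_add]
  map_smul' a f := by
    funext σ
    simp [mul_left_comm]

variable {K} {e : Equiv.Perm (Fin n)} {A B : Set (Finset (Fin n))}

theorem chainCoeff_permChainMap (hAB : ∀ σ ∈ A, σ.map e.toEmbedding ∈ B) {c : ℕ}
    (f : SimplicialChain K A c) (σ : Finset (Fin n)) :
    chainCoeff (permChainMap K e B c f) (σ.map e.toEmbedding) =
      inversionSign K e σ * chainCoeff f σ := by
  by_cases hB : σ.map e.toEmbedding ∈ B ∧ (σ.map e.toEmbedding).card = c
  · rw [chainCoeff_of_mem _ hB]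
    simp [permChainMap, Finset.map_map]
  · have hA : ¬(σ ∈ A ∧ σ.card = c) := fun h => hB ⟨hAB σ h.1, by rw [Finset.card_map, h.2]⟩
    rw [chainCoeff_of_notMem _ hB, chainCoeff_of_notMem f hA, mul_zero]

theorem exists_map_eq (e : Equiv.Perm (Fin n)) (τ : Finset (Fin n)) :
    ∃ ρ : Finset (Fin n), ρ.map e.toEmbedding = τ :=
  ⟨τ.map e.symm.toEmbedding, by simp [Finset.map_map]⟩

theorem boundary_permChainMap (hA : DownClosed A) (hB : DownClosed B)
    (hAB : ∀ σ ∈ A, σ.map e.toEmbedding ∈ B) {c : ℕ} (u : SimplicialChain K A (c + 1)) :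
    simplicialBoundary K B c (permChainMap K e B (c + 1) u) =
      permChainMap K e B c (simplicialBoundary K A c u) := by
  refine chainCoeff_injective (funext fun τ => ?_)
  obtain ⟨ρ, rfl⟩ := exists_map_eq e τ
  rw [chainCoeff_simplicialBoundary hB, chainCoeff_permChainMap hAB,
    chainCoeff_simplicialBoundary hA, Finset.mul_sum, ← Equiv.sum_comp e]
  refine Finset.sum_congr rfl fun k _ => ?_
  by_cases hk : k ∈ ρ
  · simp [hk]
  · have hmap : insert (e k) (ρ.map e.toEmbedding) = (insert k ρ).map e.toEmbedding := by
      simp [Finset.map_insert]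
    rw [if_pos (by simpa using hk), if_pos hk, hmap, chainCoeff_permChainMap hAB, smul_eq_mul,
      smul_eq_mul, ← mul_assoc, ← mul_assoc, mul_comm _ (inversionSign K e _),
      inversionSign_insert_mul K e hk]

theorem permChainMap_extendChain {D : Set (Finset (Fin n))} (hD : ∀ σ ∈ D, ∀ a ∈ σ, e a = a)
    (hDA : D ⊆ A) (hDB : D ⊆ B) (hAB : ∀ σ ∈ A, σ.map e.toEmbedding ∈ B) {c : ℕ}
    (z : SimplicialChain K D c) :
    permChainMap K e B c (extendChain K hDA c z) = extendChain K hDB c z := by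
  refine chainCoeff_injective (funext fun τ => ?_)
  obtain ⟨ρ, rfl⟩ := exists_map_eq e τ
  rw [chainCoeff_permChainMap hAB, chainCoeff_extendChain, chainCoeff_extendChain]
  by_cases hρ : ρ ∈ D
  · rw [inversionSign_eq_one K (hD ρ hρ), one_mul, map_eq_self_of_forall_apply_eq (hD ρ hρ)]
  · have hρe : ρ.map e.toEmbedding ∉ D := fun h => hρ <| by
      have hfix : ∀ a ∈ ρ, e a = a := fun a ha =>
        e.injective (hD _ h (e a) (Finset.mem_map_equiv.2 (by simpa using ha)))
      rwa [map_eq_self_of_forall_apply_eq hfix] at h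
    rw [chainCoeff_of_notMem z (fun h => hρ h.1), chainCoeff_of_notMem z (fun h => hρe h.1),
      mul_zero]

end PermutationChainMap

section Shifting

variable {n : ℕ} {Δ : Set (Finset (Fin n))} {i j : Fin n} {W σ : Finset (Fin n)}

theorem DownClosed.restrictC (hΔ : DownClosed Δ) (W : Finset (Fin n)) :
    DownClosed (restrictC Δ W) :=
  fun σ hσ τ hτ => ⟨hΔ σ hσ.1 τ hτ, hτ.trans hσ.2⟩

theorem mem_restrictC_shiftOp_insert (hij : i ≠ j) (hjW : j ∉ W) :
    σ ∈ restrictC (shiftOp Δ i j) (insert i W) ↔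
      σ ∈ restrictC Δ (insert i W) ∧ (i ∈ σ → insert j (σ.erase i) ∈ Δ) := by
  have hji : j ∉ insert i W := by simp [hij.symm, hjW]
  constructor
  · rintro ⟨⟨ρ, hρ, rfl⟩, hsub⟩
    unfold shiftFace at hsub ⊢
    split_ifs at hsub ⊢ with hshift
    · exact absurd (hsub (Finset.mem_insert_self j _)) hji
    · refine ⟨⟨hρ, hsub⟩, fun hi => ?_⟩
      by_contra hns
      exact hshift ⟨hi, fun hj => hji (hsub hj), hns⟩
  · rintro ⟨⟨hσ, hsub⟩, hshifted⟩
    exact ⟨⟨σ, hσ, if_neg fun h => h.2.2 (hshifted h.1)⟩, hsub⟩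

theorem restrictC_shiftOp_subset (hij : i ≠ j) (hjW : j ∉ W) :
    restrictC (shiftOp Δ i j) (insert i W) ⊆ restrictC Δ (insert i W) :=
  fun _ hσ => ((mem_restrictC_shiftOp_insert hij hjW).1 hσ).1

theorem downClosed_restrictC_shiftOp (hΔ : DownClosed Δ) (hij : i ≠ j) (hjW : j ∉ W) :
    DownClosed (restrictC (shiftOp Δ i j) (insert i W)) := by
  intro σ hσ τ hτ
  rw [mem_restrictC_shiftOp_insert hij hjW] at hσ ⊢
  exact ⟨hΔ.restrictC _ σ hσ.1 τ hτ, fun hi => hΔ _ (hσ.2 (hτ hi)) _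
    (Finset.insert_subset_insert _ (Finset.erase_subset_erase _ hτ))⟩

theorem map_swap_of_notMem (hi : i ∉ σ) (hj : j ∉ σ) :
    σ.map (Equiv.swap i j).toEmbedding = σ :=
  map_eq_self_of_forall_apply_eq fun _ ha =>
    Equiv.swap_apply_of_ne_of_ne (ne_of_mem_of_not_mem ha hi) (ne_of_mem_of_not_mem ha hj)

theorem map_swap_of_mem_of_notMem (hi : i ∈ σ) (hj : j ∉ σ) :
    σ.map (Equiv.swap i j).toEmbedding = insert j (σ.erase i) := by
  conv_lhs => rw [← Finset.insert_erase hi]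
  rw [Finset.map_insert, map_swap_of_notMem (Finset.notMem_erase i σ)
    (fun h => hj (Finset.mem_of_mem_erase h))]
  simp

theorem map_swap_mem_restrictC_shiftOp (hij : i ≠ j) (hjW : j ∉ W) :
    ∀ σ ∈ restrictC (shiftOp Δ i j) (insert i W),
      σ.map (Equiv.swap i j).toEmbedding ∈ restrictC Δ (insert j W) := by
  intro σ hσ
  obtain ⟨⟨hσΔ, hsub⟩, hshifted⟩ := (mem_restrictC_shiftOp_insert hij hjW).1 hσ
  have hjσ : j ∉ σ := fun h => (by simp [hij.symm, hjW] : j ∉ insert i W) (hsub h)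
  by_cases hi : i ∈ σ
  · rw [map_swap_of_mem_of_notMem hi hjσ]
    exact ⟨hshifted hi, Finset.insert_subset_insert _ (Finset.subset_insert_iff.1 hsub)⟩
  · rw [map_swap_of_notMem hi hjσ]
    exact ⟨hσΔ, ((Finset.subset_insert_iff_of_notMem hi).1 hsub).trans (Finset.subset_insert _ _)⟩

theorem swap_apply_eq_self_of_mem_restrictC (hiW : i ∉ W) (hjW : j ∉ W) :
    ∀ σ ∈ restrictC Δ W, ∀ a ∈ σ, Equiv.swap i j a = a :=
  fun _ hσ _ ha => Equiv.swap_apply_of_ne_of_ne (ne_of_mem_of_not_mem (hσ.2 ha) hiW)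
    (ne_of_mem_of_not_mem (hσ.2 ha) hjW)

end Shifting

section MayerVietoris

variable {K : Type} [Field K] {n : ℕ}

theorem inducedHomologyMap_mk_eq_zero_iff {Δ' Δ'' : Set (Finset (Fin n))} (h : Δ' ⊆ Δ'')
    (hdc : DownClosed Δ') {c : ℕ} (z : simplicialCycles K Δ' c) :
    inducedHomologyMap K h hdc c (Submodule.Quotient.mk z) = 0 ↔
      ∃ u, simplicialBoundary K Δ'' c u = extendChain K h c z := by
  simp only [inducedHomologyMap, Submodule.mapQ_apply, Submodule.Quotient.mk_eq_zero,
    Submodule.mem_comap, Submodule.coe_subtype, LinearMap.mem_range]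
  rfl

theorem mayerVietorisMap_eq_zero_iff {ΔW Δ₁ Δ₂ : Set (Finset (Fin n))} (h₁ : ΔW ⊆ Δ₁)
    (h₂ : ΔW ⊆ Δ₂) (hdc : DownClosed ΔW) {c : ℕ} (x : reducedHomology K ΔW c) :
    mayerVietorisMap K h₁ h₂ hdc c x = 0 ↔
      inducedHomologyMap K h₁ hdc c x = 0 ∧ inducedHomologyMap K h₂ hdc c x = 0 := by
  simp [mayerVietorisMap, Prod.ext_iff]

end MayerVietoris

set_option synthInstance.maxHeartbeats 1000000 in
/-- **Lemma 3.2.** Let `Δ` be a simplicial complex on `[n]`, `1 ≤ i < j ≤ n`,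
`Γ = Shift_{ij}(Δ)` and `W ⊆ [n]∖{i,j}`; set `Δ₁ = Δ_{W∪{i}}`, `Δ₂ = Δ_{W∪{j}}`,
`Γ₁ = Γ_{W∪{i}}`, `Γ₂ = Γ_{W∪{j}}` (so that `Δ₁ ∩ Δ₂ = Γ₁ ∩ Γ₂ = Δ_W = Γ_W`).
Let `∂_{1,k} : H̃_k(Δ_W;K) → H̃_k(Δ₁;K) ⊕ H̃_k(Δ₂;K)` and
`∂'_{1,k} : H̃_k(Γ_W;K) → H̃_k(Γ₁;K) ⊕ H̃_k(Γ₂;K)` be the maps appearing in the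
reduced Mayer–Vietoris exact sequences of the pairs `(Δ₁, Δ₂)` and `(Γ₁, Γ₂)`.
Then `Ker(∂'_{1,k}) ⊆ Ker(∂_{1,k})` for all `k`. -/
theorem ker_mayerVietorisMap_shiftOp_le (K : Type) [Field K] (n : ℕ)
    (Δ : Set (Finset (Fin n))) (hΔ : IsSimplicialComplex Δ)
    (i j : Fin n) (hij : i < j) (W : Finset (Fin n)) (hiW : i ∉ W) (hjW : j ∉ W)
    (hdcW : DownClosed (restrictC Δ W))
    (h₁ : restrictC Δ W ⊆ restrictC Δ (insert i W))
    (h₂ : restrictC Δ W ⊆ restrictC Δ (insert j W))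
    (h₁' : restrictC Δ W ⊆ restrictC (shiftOp Δ i j) (insert i W))
    (h₂' : restrictC Δ W ⊆ restrictC (shiftOp Δ i j) (insert j W))
    (c : ℕ) :
    LinearMap.ker (mayerVietorisMap K h₁' h₂' hdcW c) ≤
      LinearMap.ker (mayerVietorisMap K h₁ h₂ hdcW c) := by
  intro x hx
  obtain ⟨z, rfl⟩ := Submodule.Quotient.mk_surjective _ x
  rw [LinearMap.mem_ker, mayerVietorisMap_eq_zero_iff] at hx ⊢
  obtain ⟨u, hu⟩ := (inducedHomologyMap_mk_eq_zero_iff h₁' hdcW z).1 hx.1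
  have hsub := restrictC_shiftOp_subset (Δ := Δ) hij.ne hjW
  have hdc := downClosed_restrictC_shiftOp hΔ.2 hij.ne hjW
  have hswap := map_swap_mem_restrictC_shiftOp (Δ := Δ) hij.ne hjW
  refine ⟨(inducedHomologyMap_mk_eq_zero_iff h₁ hdcW z).2 ⟨extendChain K hsub (c + 1) u, ?_⟩,
    (inducedHomologyMap_mk_eq_zero_iff h₂ hdcW z).2
      ⟨permChainMap K (Equiv.swap i j) _ (c + 1) u, ?_⟩⟩
  · rw [boundary_extendChain K hsub hdc, hu, extendChain_extendChain]
  · rw [boundary_permChainMap hdc (DownClosed.restrictC hΔ.2 _) hswap, hu,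
      permChainMap_extendChain (swap_apply_eq_self_of_mem_restrictC hiW hjW) h₁' h₂ hswap]
end
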